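/- Let h = 0112122122212222⋯ be the fixed point beginning with 0 of the morphism μ on {0,1,2}* given by μ(0) = 01, μ(1) = 12, μ(2) = 2. Then the abelian complexity b^(1)_h is unbounded (sup_n b^(1)_h(n) = ∞), and for all n ≥ 6 one has b^(1)_h(n) < b^(2)_h(n) < p_h(n). -/

import Mathlib

/-!
Since `μ(1 2ʲ) = 1 2ʲ⁺¹`, the fixed point is `h = 0 · 1 · 12 · 122 · 1222 ⋯`, the word `0`
followed by the blocks `1 2ʲ`, `j = 0, 1, 2, …`.

Unboundedness: the prefix of length `n` of `h` containing `C` blocks has `C` letters `1`, while the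
block `1 2ⁿ` contains the factor `2ⁿ` with none. Sliding a window of length `n` by one position
changes its number of `1`s by at most one, so all `C + 1` counts in between occur among
length-`n` factors, and these lie in distinct abelian classes.

For `n ≥ 6`, the factors `12·2ⁿ⁻²` and `21·2ⁿ⁻²` are abelian equivalent but contain the subword
`12` a different number of times, so `b⁽¹⁾(n) < b⁽²⁾(n)`. The factors `12·2ⁿ⁻⁴·21` and
`21·2ⁿ⁻⁴·12` are distinct but 2-binomially equivalent, because `x w y ∼₂ y w x` whenever
`x ∼₁ y`; hence `b⁽²⁾(n) < p(n)`.
-/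

/-- The number of occurrences of `w` as a (scattered) subword of `u`:
the binomial coefficient of the words `u` and `w`. -/
def wordBinom {A : Type*} [DecidableEq A] (u w : List A) : ℕ := u.sublists.count w

/-- `k`-binomial equivalence of finite words: all binomial coefficients with respect to
words of length at most `k` agree. -/
def BinEquiv {A : Type*} [DecidableEq A] (k : ℕ) (u v : List A) : Prop :=
  ∀ x : List A, x.length ≤ k → wordBinom u x = wordBinom v x

/-- `k`-binomial equivalence as a setoid. -/
def binSetoid (A : Type*) [DecidableEq A] (k : ℕ) : Setoid (List A) where
  r := BinEquiv k
  iseqv := ⟨fun _ _ _ => rfl, fun h x hx => (h x hx).symm,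
    fun h h' x hx => (h x hx).trans (h' x hx)⟩

/-- `u` occurs in the infinite word `x` at position `i`. -/
def OccursAt {A : Type*} (u : List A) (x : ℕ → A) (i : ℕ) : Prop :=
  u = (List.range u.length).map (fun j => x (i + j))

/-- `u` is a factor of the infinite word `x`. -/
def FactorOf {A : Type*} (u : List A) (x : ℕ → A) : Prop := ∃ i, OccursAt u x i

/-- The set of length-`n` factors of `x`. -/
def Fac {A : Type*} (x : ℕ → A) (n : ℕ) : Set (List A) :=
  {u | u.length = n ∧ FactorOf u x}

/-- Factor complexity of an infinite word. -/
noncomputable def fc {A : Type*} (x : ℕ → A) (n : ℕ) : ℕ := (Fac x n).ncard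

/-- `k`-binomial complexity of an infinite word: the number of `k`-binomial equivalence
classes of length-`n` factors. -/
noncomputable def bc {A : Type*} [DecidableEq A] (x : ℕ → A) (k n : ℕ) : ℕ :=
  (Quotient.mk (binSetoid A k) '' Fac x n).ncard

/-- Application of a morphism (given by the images of letters) to a finite word. -/
def mAp {A B : Type*} (f : A → List B) (u : List A) : List B := (u.map f).flatten

/-- A morphism is Parikh-collinear if the Parikh vectors of images of letters are
pairwise rationally collinear. -/
def ParikhCollinear {A B : Type*} [DecidableEq B] (f : A → List B) : Prop :=
  ∀ a b : A, ∃ r : ℚ, ∀ c : B, ((f b).count c : ℚ) = r * ((f a).count c)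

/-- Length-`n` prefix of an infinite word. -/
def pre {A : Type*} (x : ℕ → A) (n : ℕ) : List A := (List.range n).map x

/-- `z` is the image of the infinite word `x` under the morphism `f`, and this image
is an infinite word: images of prefixes of `x` are prefixes of `z`, of unbounded length. -/
def InfMapsTo {A B : Type*} (f : A → List B) (x : ℕ → A) (z : ℕ → B) : Prop :=
  (∀ n, mAp f (pre x n) = pre z (mAp f (pre x n)).length) ∧
  (∀ m, ∃ n, m ≤ (mAp f (pre x n)).length)

/-- The morphism `μ : 0 ↦ 01, 1 ↦ 12, 2 ↦ 2`. -/
def mu : Fin 3 → List (Fin 3) :=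
  fun a => if a = 0 then [0, 1] else if a = 1 then [1, 2] else [2]

section Binomial

variable {A : Type*} [DecidableEq A]

lemma wordBinom_eq_count_sublists' (u w : List A) : wordBinom u w = u.sublists'.count w :=
  (List.sublists_perm_sublists' u).count_eq w

@[simp]
lemma wordBinom_nil_right (u : List A) : wordBinom u [] = 1 := by
  induction u with
  | nil => rfl
  | cons a u ih =>
    rw [wordBinom_eq_count_sublists'] at ih ⊢
    rw [List.sublists'_cons, List.count_append, ih, List.count_eq_zero.2 (by simp)]

@[simp]
lemma wordBinom_nil_cons (b : A) (t : List A) : wordBinom [] (b :: t) = 0 := by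
  simp [wordBinom_eq_count_sublists']

lemma wordBinom_cons_cons (a b : A) (u t : List A) :
    wordBinom (a :: u) (b :: t) = wordBinom u (b :: t) + if b = a then wordBinom u t else 0 := by
  simp only [wordBinom_eq_count_sublists', List.sublists'_cons, List.count_append]
  congr 1
  split_ifs with hba
  · subst hba
    exact List.count_map_of_injective _ _ List.cons_injective t
  · simp [List.count_eq_zero, Ne.symm hba]

@[simp]
lemma wordBinom_singleton (u : List A) (a : A) : wordBinom u [a] = u.count a := by
  induction u with
  | nil => rfl
  | cons c u ih =>
    rw [wordBinom_cons_cons, ih, wordBinom_nil_right, List.count_cons]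
    by_cases hac : a = c <;> simp [hac, Ne.symm]

lemma wordBinom_append_pair (u v : List A) (a b : A) :
    wordBinom (u ++ v) [a, b] =
      wordBinom u [a, b] + wordBinom v [a, b] + u.count a * v.count b := by
  induction u with
  | nil => simp
  | cons c u ih =>
    rw [List.cons_append, wordBinom_cons_cons, wordBinom_cons_cons, ih, wordBinom_singleton,
      wordBinom_singleton, List.count_append, List.count_cons]
    by_cases hac : a = c
    · simp only [hac, ↓reduceIte, BEq.rfl]
      ring
    · simp [hac, Ne.symm hac]

lemma BinEquiv.mono {k l : ℕ} {u v : List A} (hkl : k ≤ l) (h : BinEquiv l u v) :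
    BinEquiv k u v :=
  fun x hx => h x (hx.trans hkl)

lemma binEquiv_one_iff {u v : List A} : BinEquiv 1 u v ↔ ∀ a, u.count a = v.count a := by
  refine ⟨fun h a => by simpa using h [a] le_rfl, fun h x hx => ?_⟩
  match x, hx with
  | [], _ => simp
  | [a], _ => simp [h a]

lemma binEquiv_two_iff {u v : List A} :
    BinEquiv 2 u v ↔ BinEquiv 1 u v ∧ ∀ a b, wordBinom u [a, b] = wordBinom v [a, b] := by
  refine ⟨fun h => ⟨h.mono one_le_two, fun a b => h [a, b] le_rfl⟩, fun ⟨h₁, h₂⟩ x hx => ?_⟩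
  match x, hx with
  | [], _ => simp
  | [a], _ => exact h₁ [a] le_rfl
  | [a, b], _ => exact h₂ a b

lemma BinEquiv.append_right {x y : List A} (h : BinEquiv 1 x y) (w : List A) :
    BinEquiv 1 (x ++ w) (y ++ w) := by
  rw [binEquiv_one_iff] at *
  simp [h]

lemma binEquiv_two_append_right_iff {x y : List A} (w : List A) (h : BinEquiv 1 x y) :
    BinEquiv 2 (x ++ w) (y ++ w) ↔ BinEquiv 2 x y := by
  simp only [binEquiv_two_iff, h, h.append_right w, true_and, wordBinom_append_pair,
    binEquiv_one_iff.1 h, Nat.add_right_cancel_iff]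

lemma binEquiv_two_append_swap {x y : List A} (w : List A) (h : BinEquiv 1 x y) :
    BinEquiv 2 (x ++ w ++ y) (y ++ w ++ x) := by
  have hc := binEquiv_one_iff.1 h
  refine binEquiv_two_iff.2
    ⟨binEquiv_one_iff.2 fun a => by simp only [List.count_append, hc], fun a b => ?_⟩
  simp only [wordBinom_append_pair, List.count_append, hc]
  ring

end Binomial

section Factors

variable {A : Type*} {x : ℕ → A}

def window (x : ℕ → A) (i n : ℕ) : List A := (List.range n).map fun j => x (i + j)

lemma occursAt_iff_eq_window {u : List A} {i : ℕ} : OccursAt u x i ↔ u = window x i u.length :=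
  Iff.rfl

lemma window_mem_fac (x : ℕ → A) (i n : ℕ) : window x i n ∈ Fac x n :=
  ⟨by simp [window], i, by simp [OccursAt, window]⟩

lemma occursAt_pre (x : ℕ → A) (n : ℕ) : OccursAt (pre x n) x 0 := by
  simp [OccursAt, pre]

lemma occursAt_iff_getElem {u : List A} {i : ℕ} :
    OccursAt u x i ↔ ∀ j (hj : j < u.length), u[j] = x (i + j) := by
  simp [OccursAt, List.ext_getElem_iff]

lemma FactorOf.of_isInfix {u v : List A} (huv : u <:+: v) (hv : FactorOf v x) :
    FactorOf u x := by
  obtain ⟨i, hi⟩ := hv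
  obtain ⟨k, hk, hget⟩ := List.infix_iff_getElem?.1 huv
  refine ⟨i + k, occursAt_iff_getElem.2 fun j hj => ?_⟩
  have := hget j hj
  rw [List.getElem?_eq_getElem (by omega), Option.some_inj, occursAt_iff_getElem.1 hi] at this
  rw [← this, Nat.add_assoc, Nat.add_comm k]

lemma finite_fac [Finite A] (x : ℕ → A) (n : ℕ) : (Fac x n).Finite :=
  (List.finite_length_eq A n).subset fun _ hu => hu.1

end Factors

lemma Set.ncard_image_lt_ncard {α β : Type*} {S : Set α} {f : α → β} (hS : S.Finite)
    {u v : α} (hu : u ∈ S) (hv : v ∈ S) (huv : u ≠ v) (hf : f u = f v) :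
    (f '' S).ncard < S.ncard :=
  (Set.ncard_image_le hS).lt_of_ne fun heq => huv (Set.injOn_of_ncard_image_eq heq hS hu hv hf)

lemma Nat.exists_eq_of_le_succ_add_one {f : ℕ → ℕ} (hf : ∀ k, f k ≤ f (k + 1) + 1)
    {i j v : ℕ} (hij : i ≤ j) (hj : f j ≤ v) (hi : v ≤ f i) : ∃ k, f k = v := by
  induction j, hij using Nat.le_induction with
  | base => exact ⟨i, le_antisymm hj hi⟩
  | succ j _ ih =>
    by_cases hv : f j ≤ v
    · exact ih hv
    · exact ⟨j + 1, by have := hf j; omega⟩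

section Complexity

variable {A : Type*} [DecidableEq A] {x : ℕ → A} {n : ℕ} {u v : List A}

lemma bc_lt_fc [Finite A] {k : ℕ} (hu : u ∈ Fac x n) (hv : v ∈ Fac x n) (huv : u ≠ v)
    (h : BinEquiv k u v) : bc x k n < fc x n :=
  Set.ncard_image_lt_ncard (finite_fac x n) hu hv huv (Quotient.sound h)

lemma bc_lt_bc [Finite A] {k l : ℕ} (hkl : k ≤ l) (hu : u ∈ Fac x n) (hv : v ∈ Fac x n)
    (hk : BinEquiv k u v) (hl : ¬ BinEquiv l u v) : bc x k n < bc x l n := by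
  let coarsen : Quotient (binSetoid A l) → Quotient (binSetoid A k) :=
    Quotient.map id fun _ _ => BinEquiv.mono hkl
  have himage : Quotient.mk (binSetoid A k) '' Fac x n =
      coarsen '' (Quotient.mk (binSetoid A l) '' Fac x n) := by
    rw [Set.image_image]
    rfl
  rw [bc, himage]
  exact Set.ncard_image_lt_ncard ((finite_fac x n).image _) (Set.mem_image_of_mem _ hu)
    (Set.mem_image_of_mem _ hv) (fun h => hl (Quotient.exact h)) (Quotient.sound hk)

lemma ncard_image_count_fac_le_bc_one [Finite A] (a : A) :
    ((fun w => w.count a) '' Fac x n).ncard ≤ bc x 1 n := by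
  let countMk : Quotient (binSetoid A 1) → ℕ :=
    Quotient.lift (fun w => w.count a) fun _ _ h => binEquiv_one_iff.1 h a
  have himage : (fun w => w.count a) '' Fac x n =
      countMk '' (Quotient.mk (binSetoid A 1) '' Fac x n) := by
    rw [Set.image_image]
    rfl
  rw [himage]
  exact Set.ncard_image_le ((finite_fac x n).image _)

lemma count_window_le_succ (a : A) (i : ℕ) :
    (window x i n).count a ≤ (window x (i + 1) n).count a + 1 := by
  have hsnoc : window x i (n + 1) = window x i n ++ [x (i + n)] := by
    simp [window, List.range_succ]
  have hcons : window x i (n + 1) = x i :: window x (i + 1) n := by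
    simp [window, List.range_succ_eq_map, Nat.add_right_comm, Nat.add_assoc]
  have h₁ := congrArg (List.count a) hsnoc
  have h₂ := congrArg (List.count a) hcons
  simp only [List.count_append, List.count_cons] at h₁ h₂
  split_ifs at h₂ <;> omega

lemma Icc_count_subset_image_fac {i j : ℕ} (a : A) (hij : i ≤ j) (hu : OccursAt u x i)
    (hv : OccursAt v x j) (hlen : u.length = v.length) :
    Set.Icc (v.count a) (u.count a) ⊆ (fun w : List A => w.count a) '' Fac x u.length := by
  rintro c ⟨hvc, hcu⟩
  rw [occursAt_iff_eq_window] at hu hv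
  rw [hv, ← hlen] at hvc
  rw [hu] at hcu
  obtain ⟨k, hk⟩ := Nat.exists_eq_of_le_succ_add_one (count_window_le_succ a) hij hvc hcu
  exact ⟨window x k u.length, window_mem_fac x k _, hk⟩

end Complexity

lemma List.cons_replicate_append {α : Type*} (a : α) (n : ℕ) (l : List α) :
    a :: (List.replicate n a ++ l) = List.replicate n a ++ a :: l := by
  rw [← List.cons_append, ← List.replicate_succ, List.replicate_succ', List.append_assoc,
    List.singleton_append]

section FixedPoint

def muBlock (j : ℕ) : List (Fin 3) := 1 :: List.replicate j 2

def muPrefix (k : ℕ) : List (Fin 3) := 0 :: (List.range k).flatMap muBlock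

lemma mAp_mu_muBlock (j : ℕ) : mAp mu (muBlock j) = muBlock (j + 1) := by
  simp [mAp, muBlock, mu, List.map_replicate, List.replicate_succ]

lemma mAp_mu_muPrefix (k : ℕ) : mAp mu (muPrefix k) = muPrefix (k + 1) := by
  have hblock : ∀ j, (muBlock j).flatMap mu = muBlock (j + 1) := mAp_mu_muBlock
  simp only [mAp, muPrefix, ← List.flatMap_def, List.flatMap_cons, List.flatMap_assoc, hblock,
    List.range_succ_eq_map, List.flatMap_map]
  rfl

lemma muPrefix_succ (k : ℕ) : muPrefix (k + 1) = muPrefix k ++ muBlock k := by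
  simp [muPrefix, List.range_succ]

lemma count_one_muPrefix (k : ℕ) : (muPrefix k).count 1 = k := by
  induction k with
  | zero => rfl
  | succ k ih => simp [muPrefix_succ, ih, muBlock, List.count_replicate]

lemma muBlocks_isInfix_muPrefix (i : ℕ) :
    muBlock i ++ muBlock (i + 1) ++ muBlock (i + 2) <:+: muPrefix (i + 3) :=
  ⟨muPrefix i, [], by simp [muPrefix_succ]⟩

variable {h : ℕ → Fin 3} (h0 : h 0 = 0) (hfix : InfMapsTo mu h h)
include h0 hfix

lemma pre_muPrefix (k : ℕ) : pre h (muPrefix k).length = muPrefix k := by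
  induction k with
  | zero => simp [pre, muPrefix, h0]
  | succ k ih =>
    have := hfix.1 (muPrefix k).length
    rw [ih, mAp_mu_muPrefix] at this
    exact this.symm

lemma factorOf_of_isInfix_muBlocks {u : List (Fin 3)} {i : ℕ}
    (hu : u <:+: muBlock i ++ muBlock (i + 1) ++ muBlock (i + 2)) : FactorOf u h :=
  FactorOf.of_isInfix (hu.trans (muBlocks_isInfix_muPrefix i))
    ⟨0, pre_muPrefix h0 hfix (i + 3) ▸ occursAt_pre h _⟩

lemma factorOf_replicate_two (n : ℕ) : FactorOf (List.replicate n 2) h :=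
  factorOf_of_isInfix_muBlocks h0 hfix (i := n)
    ⟨[1], muBlock (n + 1) ++ muBlock (n + 2), by simp [muBlock]⟩

lemma factorOf_mu_abelian_pair (m : ℕ) :
    FactorOf ([1, 2] ++ List.replicate (m + 2) 2) h ∧
      FactorOf ([2, 1] ++ List.replicate (m + 2) 2) h :=
  ⟨factorOf_of_isInfix_muBlocks h0 hfix (i := m + 1)
      ⟨muBlock (m + 1) ++ muBlock (m + 2), [],
        by simp [muBlock, List.replicate_succ', List.cons_replicate_append]⟩,
    factorOf_of_isInfix_muBlocks h0 hfix (i := m + 1)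
      ⟨1 :: List.replicate m 2, muBlock (m + 3), by simp [muBlock, List.replicate_succ']⟩⟩

lemma factorOf_mu_binomial_pair (m : ℕ) :
    FactorOf ([1, 2] ++ List.replicate (m + 2) 2 ++ [2, 1]) h ∧
      FactorOf ([2, 1] ++ List.replicate (m + 2) 2 ++ [1, 2]) h :=
  ⟨factorOf_of_isInfix_muBlocks h0 hfix (i := m + 4)
      ⟨[], List.replicate (m + 5) 2 ++ muBlock (m + 6),
        by simp [muBlock, List.replicate_succ', List.cons_replicate_append]⟩,
    factorOf_of_isInfix_muBlocks h0 hfix (i := m + 1)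
      ⟨1 :: List.replicate m 2, List.replicate (m + 2) 2,
        by simp [muBlock, List.replicate_succ', List.cons_replicate_append]⟩⟩

end FixedPoint

theorem mu_fixed_point_complexities (h : ℕ → Fin 3) (h0 : h 0 = 0)
    (hfix : InfMapsTo mu h h) :
    (∀ C : ℕ, ∃ n : ℕ, C < bc h 1 n) ∧
    (∀ n : ℕ, 6 ≤ n → bc h 1 n < bc h 2 n ∧ bc h 2 n < fc h n) := by
  refine ⟨fun C => ⟨(muPrefix C).length, ?_⟩, fun n hn => ?_⟩
  · obtain ⟨j, hj⟩ := factorOf_replicate_two h0 hfix (muPrefix C).length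
    have hsub := Icc_count_subset_image_fac 1 (Nat.zero_le j)
      (occursAt_pre h (muPrefix C).length) hj (by simp [pre])
    rw [pre_muPrefix h0 hfix, count_one_muPrefix, List.count_replicate] at hsub
    calc C < (Set.Icc 0 C).ncard := by simp
      _ ≤ _ := Set.ncard_le_ncard hsub ((finite_fac h _).image _)
      _ ≤ bc h 1 _ := ncard_image_count_fac_le_bc_one 1
  · obtain ⟨m, rfl⟩ : ∃ m, n = m + 6 := ⟨n - 6, by omega⟩
    obtain ⟨hu₁, hv₁⟩ := factorOf_mu_abelian_pair h0 hfix (m + 2)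
    obtain ⟨hu₂, hv₂⟩ := factorOf_mu_binomial_pair h0 hfix m
    have h₁₂ : BinEquiv 1 ([1, 2] : List (Fin 3)) [2, 1] := binEquiv_one_iff.2 (by decide)
    have h₁₂' : ¬ BinEquiv 2 ([1, 2] : List (Fin 3)) [2, 1] :=
      fun h => absurd (h [1, 2] le_rfl) (by decide)
    refine ⟨bc_lt_bc one_le_two ⟨?_, hu₁⟩ ⟨?_, hv₁⟩ (h₁₂.append_right _)
      ((binEquiv_two_append_right_iff _ h₁₂).not.2 h₁₂'),
      bc_lt_fc ⟨?_, hu₂⟩ ⟨?_, hv₂⟩ (by simp) (binEquiv_two_append_swap _ h₁₂)⟩ <;> simp
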